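/- arXiv:2306.13131 — 6 statements merged into one kernel-verified Lean document; each statement's English description precedes it below -/
import Mathlib

section
/- In the chain of diamonds graph with chain length L (L odd), obtained from a path on L vertices by replacing each even-indexed vertex with a doublet (two adjacent vertices each connected to the neighboring path vertices), the maximum independent set is unique and consists exactly of the (L+1)/2 odd-indexed singleton vertices. -/
/-- Vertices of the doublet chain (chain of diamonds) of length `L`:
a pair of a position `p.1 : Fin L` (0-indexed; paper positions are `p.1.val + 1`)
and a label `p.2 : Bool`; the second vertex of a doublet (label `true`) exists only
at 0-indexed odd positions (paper-even positions). -/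
abbrev DVertex (L : ℕ) := {p : Fin L × Bool // p.2 = true → p.1.val % 2 = 1}

/-- The chain-of-diamonds graph: two distinct vertices are adjacent iff their
positions differ by at most one (so doublet partners are adjacent, and all
vertices at consecutive positions are adjacent). -/
def doubletChain (L : ℕ) : SimpleGraph (DVertex L) where
  Adj p q := p ≠ q ∧ p.val.1.val ≤ q.val.1.val + 1 ∧ q.val.1.val ≤ p.val.1.val + 1
  symm := ⟨fun _ _ h => ⟨h.1.symm, h.2.2, h.2.1⟩⟩
  loopless := ⟨fun _ h => h.1 rfl⟩

/-- `S` is an independent set of the graph `G`. -/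
def IsIndepSet {V : Type*} (G : SimpleGraph V) (S : Finset V) : Prop :=
  ∀ a ∈ S, ∀ b ∈ S, ¬ G.Adj a b

/-- The set of singleton vertices at paper-odd (0-indexed even) positions. -/
def MISset (L : ℕ) : Finset (DVertex L) :=
  Finset.univ.filter fun p => p.val.1.val % 2 = 0

/-! Two distinct vertices of the doublet chain whose positions differ by at most one are
adjacent, so an independent set has pairwise distinct positions, any two at distance at least
two. Among `t + 1` such positions in `{0, …, 2t}` none can be odd: an odd position `2k + 1`
leaves room for at most `k` positions to its left and `t - k - 1` to its right. Since the
doublet partners sit at odd positions, an independent set of size `t + 1` only uses the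
singleton vertices at even positions, i.e. it lies in `MISset`, which has exactly `t + 1`
elements. -/

open Finset

def TwoSeparated (T : Set ℕ) : Prop :=
  T.Pairwise fun x y => x + 2 ≤ y ∨ y + 2 ≤ x

namespace TwoSeparated

theorem mono {S T : Set ℕ} (h : S ⊆ T) (hT : TwoSeparated T) : TwoSeparated S :=
  Set.Pairwise.mono h hT

theorem card_le {T : Finset ℕ} (hT : TwoSeparated T) {a b : ℕ}
    (hab : ∀ x ∈ T, a ≤ x ∧ x < b) : #T ≤ (b - a + 1) / 2 := by
  calc #T ≤ #(range ((b - a + 1) / 2)) := by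
        refine card_le_card_of_injOn (fun x => (x - a) / 2) (fun x hx => ?_) ?_
        · have := hab x hx
          simp only [coe_range, Set.mem_Iio]
          omega
        · intro x hx y hy hxy
          by_contra hne
          have := hT hx hy hne
          have := hab x hx
          have := hab y hy
          simp only at hxy
          omega
    _ = (b - a + 1) / 2 := card_range _

theorem card_filter_lt_le {T : Finset ℕ} (hT : TwoSeparated T) {m : ℕ} (hm : m ∈ T) :
    #(T.filter (· < m)) ≤ m / 2 := by
  have := (hT.mono (coe_subset.mpr (filter_subset (· < m) T))).card_le (a := 0) (b := m - 1)
    fun x hx => by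
      obtain ⟨hxT, hxm⟩ := mem_filter.mp hx
      have := hT hxT hm hxm.ne
      omega
  omega

theorem card_filter_gt_le {T : Finset ℕ} (hT : TwoSeparated T) {n : ℕ}
    (hlt : ∀ x ∈ T, x < n) {m : ℕ} (hm : m ∈ T) : #(T.filter (m < ·)) ≤ (n - m - 1) / 2 := by
  have := (hT.mono (coe_subset.mpr (filter_subset (m < ·) T))).card_le (a := m + 2) (b := n)
    fun x hx => by
      obtain ⟨hxT, hmx⟩ := mem_filter.mp hx
      have := hT hxT hm hmx.ne'
      have := hlt x hxT
      omega
  omega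

theorem card_le_of_mem {T : Finset ℕ} (hT : TwoSeparated T) {n : ℕ}
    (hlt : ∀ x ∈ T, x < n) {m : ℕ} (hm : m ∈ T) : #T ≤ m / 2 + 1 + (n - m - 1) / 2 :=
  calc #T ≤ #(T.filter (· < m) ∪ insert m (T.filter (m < ·))) := by
        refine card_le_card fun x hx => ?_
        simp only [mem_union, mem_insert, mem_filter, hx, true_and]
        omega
    _ ≤ #(T.filter (· < m)) + (#(T.filter (m < ·)) + 1) :=
        (card_union_le _ _).trans (Nat.add_le_add_left (card_insert_le _ _) _)
    _ ≤ m / 2 + 1 + (n - m - 1) / 2 := by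
        have := hT.card_filter_lt_le hm
        have := hT.card_filter_gt_le hlt hm
        omega

theorem even_of_card_eq {T : Finset ℕ} (hT : TwoSeparated T) {t : ℕ}
    (hlt : ∀ x ∈ T, x < 2 * t + 1) (hcard : #T = t + 1) {m : ℕ} (hm : m ∈ T) : Even m := by
  by_contra hodd
  obtain ⟨k, rfl⟩ := Nat.not_even_iff_odd.mp hodd
  have := hT.card_le_of_mem hlt hm
  have := hlt _ hm
  omega

end TwoSeparated

namespace IsIndepSet

variable {L : ℕ} {S : Finset (DVertex L)}

theorem pos_add_two_le_or (hS : IsIndepSet (doubletChain L) S) {p q : DVertex L}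
    (hp : p ∈ S) (hq : q ∈ S) (hne : p ≠ q) :
    p.val.1.val + 2 ≤ q.val.1.val ∨ q.val.1.val + 2 ≤ p.val.1.val := by
  have h := hS p hp q hq
  simp only [doubletChain, ne_eq, hne, not_false_eq_true, true_and, not_and_or, not_le] at h
  omega

theorem injOn_pos_div_two (hS : IsIndepSet (doubletChain L) S) :
    Set.InjOn (fun p : DVertex L => p.val.1.val / 2) S := by
  intro p hp q hq hpq
  by_contra hne
  have := hS.pos_add_two_le_or hp hq hne
  simp only at hpq
  omega

theorem injOn_pos (hS : IsIndepSet (doubletChain L) S) :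
    Set.InjOn (fun p : DVertex L => p.val.1.val) S :=
  Set.InjOn.of_comp (g := (· / 2)) hS.injOn_pos_div_two

theorem twoSeparated_image_pos (hS : IsIndepSet (doubletChain L) S) :
    TwoSeparated (S.image fun p : DVertex L => p.val.1.val) := by
  rintro _ hx _ hy hne
  obtain ⟨p, hp, rfl⟩ := mem_image.mp hx
  obtain ⟨q, hq, rfl⟩ := mem_image.mp hy
  exact hS.pos_add_two_le_or hp hq (by rintro rfl; exact hne rfl)

theorem card_le (hS : IsIndepSet (doubletChain L) S) : #S ≤ (L + 1) / 2 := by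
  rw [← card_image_of_injOn hS.injOn_pos]
  simpa using hS.twoSeparated_image_pos.card_le (a := 0) (b := L) (by simp)

theorem subset_MISset {t : ℕ} {S : Finset (DVertex (2 * t + 1))}
    (hS : IsIndepSet (doubletChain (2 * t + 1)) S) (hcard : #S = t + 1) : S ⊆ MISset _ := by
  intro p hp
  have heven := hS.twoSeparated_image_pos.even_of_card_eq
    (by simp only [mem_image]; rintro _ ⟨q, -, rfl⟩; exact q.val.1.isLt)
    (by rw [card_image_of_injOn hS.injOn_pos, hcard]) (mem_image_of_mem _ hp)
  simpa [MISset, Nat.even_iff] using heven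

end IsIndepSet

theorem DVertex.label_eq_false {L : ℕ} (p : DVertex L) (hp : p.val.1.val % 2 = 0) :
    p.val.2 = false := by
  by_contra h
  have := p.property (by simpa using h)
  omega

theorem isIndepSet_MISset (L : ℕ) : IsIndepSet (doubletChain L) (MISset L) := by
  rintro p hp q hq ⟨hne, h₁, h₂⟩
  simp only [MISset, mem_filter, mem_univ, true_and] at hp hq
  have hpos : p.val.1 = q.val.1 := Fin.ext (by omega)
  exact hne (Subtype.ext (Prod.ext hpos (by rw [p.label_eq_false hp, q.label_eq_false hq])))

theorem card_MISset (t : ℕ) : #(MISset (2 * t + 1)) = t + 1 := by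
  calc #(MISset (2 * t + 1)) = #(range (t + 1)) := by
        refine card_nbij (fun p => p.val.1.val / 2) (fun p _ => ?_)
          (isIndepSet_MISset _).injOn_pos_div_two (fun k hk => ?_)
        · simp only [coe_range, Set.mem_Iio]
          omega
        · have hk : k < t + 1 := by simpa using hk
          exact ⟨⟨(⟨2 * k, by omega⟩, false), by simp⟩, by simp [MISset], by simp⟩
    _ = t + 1 := card_range _

/-- For odd `L`, the chain of diamonds has a unique maximum
independent set, consisting exactly of the `(L+1)/2` paper-odd singleton vertices. -/
theorem doubletChain_unique_MIS (L : ℕ) (hL : Odd L) :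
    IsIndepSet (doubletChain L) (MISset L) ∧
    (MISset L).card = (L + 1) / 2 ∧
    (∀ S : Finset (DVertex L), IsIndepSet (doubletChain L) S → S.card ≤ (L + 1) / 2) ∧
    (∀ S : Finset (DVertex L), IsIndepSet (doubletChain L) S → S.card = (L + 1) / 2 →
      S = MISset L) := by
  obtain ⟨t, rfl⟩ := hL
  have hhalf : (2 * t + 1 + 1) / 2 = t + 1 := by omega
  refine ⟨isIndepSet_MISset _, hhalf ▸ card_MISset t, fun S hS => hS.card_le,
    fun S hS hcard => ?_⟩
  rw [hhalf] at hcard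
  exact eq_of_subset_of_card_le (hS.subset_MISset hcard) (by rw [card_MISset, hcard])
end

section
/- In the chain of diamonds graph with odd chain length L, the number of independent sets of size |MIS| - 1 equals 2^{(L+3)/2} - (L+5)/2, and hence the degeneracy ratio D(|MIS|-1)/D(|MIS|) grows exponentially in L. -/
/-- `numIndep L s` is the number `D(s)` of independent sets of size `s`
in the chain of diamonds of length `L`. -/
noncomputable def numIndep (L s : ℕ) : ℕ :=
  Set.ncard {S : Finset (DVertex L) | IsIndepSet (doubletChain L) S ∧ S.card = s}

open Finset

theorem isIndepSet_iff_isIndepSet_coe {V : Type*} {G : SimpleGraph V} {S : Finset V} :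
    IsIndepSet G S ↔ G.IsIndepSet (S : Set V) :=
  ⟨fun h _ ha _ hb _ => h _ ha _ hb, fun h _ ha b hb hab =>
    h ha hb (fun e => G.loopless.irrefl b (e ▸ hab)) hab⟩

namespace SimpleGraph

variable {V W : Type*} {G : SimpleGraph V}

theorem Embedding.isIndepSet_map_iff {G' : SimpleGraph W} (f : G' ↪g G) {s : Finset W} :
    G.IsIndepSet (s.map f.toEmbedding : Set V) ↔ G'.IsIndepSet (s : Set W) := by
  rw [coe_map, isIndepSet_iff, f.toEmbedding.injective.injOn.pairwise_image]
  simp only [Set.Pairwise, Function.onFun, RelEmbedding.coe_toEmbedding, f.map_adj_iff]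

section Counting

variable [Fintype V] [DecidableEq V] [DecidableRel G.Adj]

theorem indepSetFinset_zero : G.indepSetFinset 0 = {∅} := by
  ext s
  simp +contextual [isNIndepSet_iff]

theorem Embedding.card_indepSetFinset_filter_subset_range [Fintype W] [DecidableEq W]
    {G' : SimpleGraph W} [DecidableRel G'.Adj] (f : G' ↪g G) (n : ℕ)
    [DecidablePred fun s : Finset V => ↑s ⊆ Set.range f] :
    #{s ∈ G.indepSetFinset n | ↑s ⊆ Set.range f} = #(G'.indepSetFinset n) := by
  rw [← card_map (mapEmbedding f.toEmbedding).toEmbedding]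
  congr 1
  ext s
  simp only [mem_filter, mem_map, mem_indepSetFinset_iff, isNIndepSet_iff]
  constructor
  · rintro ⟨⟨hs, rfl⟩, hsub⟩
    obtain ⟨t, -, rfl⟩ := (subset_map_iff (f := f.toEmbedding) (s := s) (t := univ)).mp
      (fun v hv => by simpa using hsub hv)
    exact ⟨t, ⟨f.isIndepSet_map_iff.mp hs, by simp⟩, rfl⟩
  · rintro ⟨t, ⟨ht, rfl⟩, rfl⟩
    refine ⟨⟨f.isIndepSet_map_iff.mpr ht, by simp⟩, ?_⟩
    simp

theorem card_indepSetFinset_succ_filter_mem (v : V) (n : ℕ)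
    [DecidablePred fun s : Finset V => ↑s ⊆ (insert v (G.neighborSet v))ᶜ] :
    #{s ∈ G.indepSetFinset (n + 1) | v ∈ s} =
      #{s ∈ G.indepSetFinset n | ↑s ⊆ (insert v (G.neighborSet v))ᶜ} := by
  refine card_nbij' (·.erase v) (insert v) ?_ ?_ ?_ ?_
  · intro s hs
    simp only [coe_filter, mem_indepSetFinset_iff, isNIndepSet_iff, Set.mem_ofPred_eq] at hs ⊢
    obtain ⟨⟨hind, hcard⟩, hv⟩ := hs
    refine ⟨⟨hind.mono (by simp), by simp [card_erase_of_mem hv, hcard]⟩, ?_⟩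
    intro w hw
    simp only [coe_erase, Set.mem_sdiff, mem_coe, Set.mem_singleton_iff] at hw
    simp only [Set.mem_compl_iff, Set.mem_insert_iff, mem_neighborSet, not_or]
    exact ⟨hw.2, hind hv hw.1 (Ne.symm hw.2)⟩
  · intro s hs
    simp only [coe_filter, mem_indepSetFinset_iff, isNIndepSet_iff, Set.mem_ofPred_eq] at hs ⊢
    obtain ⟨⟨hind, hcard⟩, hsub⟩ := hs
    have hv : v ∉ s := fun h => hsub h (Set.mem_insert v _)
    refine ⟨⟨?_, by rw [card_insert_of_notMem hv, hcard]⟩, mem_insert_self v s⟩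
    rw [coe_insert, isIndepSet_iff, Set.pairwise_insert]
    refine ⟨hind, fun w hw _ => ?_⟩
    have hvw : ¬G.Adj v w := fun h => hsub hw (Set.mem_insert_of_mem _ h)
    exact ⟨hvw, fun h => hvw h.symm⟩
  · intro s hs
    simp only [coe_filter, Set.mem_ofPred_eq] at hs
    exact insert_erase hs.2
  · intro s hs
    simp only [coe_filter, Set.mem_ofPred_eq] at hs
    exact erase_insert fun h => hs.2 h (Set.mem_insert v _)

theorem Embedding.card_indepSetFinset_succ_filter_mem_of_range_eq [Fintype W] [DecidableEq W]
    {G' : SimpleGraph W} [DecidableRel G'.Adj] (f : G' ↪g G) {v : V}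
    (hf : Set.range f = (insert v (G.neighborSet v))ᶜ) (n : ℕ) :
    #{s ∈ G.indepSetFinset (n + 1) | v ∈ s} = #(G'.indepSetFinset n) := by
  classical
  rw [card_indepSetFinset_succ_filter_mem, ← hf, f.card_indepSetFinset_filter_subset_range]

theorem IsClique.card_indepSetFinset_eq_add_sum {K : Finset V} (hK : G.IsClique (K : Set V))
    (n : ℕ) :
    #(G.indepSetFinset n) = #{s ∈ G.indepSetFinset n | Disjoint s K} +
      ∑ v ∈ K, #{s ∈ G.indepSetFinset n | v ∈ s} := by
  rw [← card_filter_add_card_filter_not (s := G.indepSetFinset n) (fun s => Disjoint s K),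
    ← card_biUnion]
  · congr 2
    ext s
    simp only [mem_filter, mem_biUnion, not_disjoint_iff]
    constructor
    · rintro ⟨hs, v, hvs, hvK⟩
      exact ⟨v, hvK, hs, hvs⟩
    · rintro ⟨v, hvK, hs, hvs⟩
      exact ⟨hs, v, hvs, hvK⟩
  · intro v hv w hw hvw
    simp only [Function.onFun, disjoint_filter, mem_indepSetFinset_iff]
    intro s hs hvs hws
    exact hs.isIndepSet hvs hws hvw (hK hv hw hvw)

end Counting

end SimpleGraph

open SimpleGraph

namespace DVertex

variable {L L' : ℕ}

def layer (v : DVertex L) : ℕ := v.val.1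

theorem layer_lt (v : DVertex L) : v.layer < L := v.val.1.isLt

theorem ext_layer {v w : DVertex L} (hl : v.layer = w.layer) (hb : v.val.2 = w.val.2) : v = w :=
  Subtype.ext (Prod.ext (Fin.ext hl) hb)

def castLE (h : L ≤ L') : DVertex L ↪ DVertex L' where
  toFun v := ⟨(Fin.castLE h v.val.1, v.val.2), v.property⟩
  inj' v w hvw := by
    have hl := congrArg layer hvw
    have hb := congrArg (·.val.2) hvw
    exact ext_layer hl hb

@[simp]
theorem layer_castLE (h : L ≤ L') (v : DVertex L) : (castLE h v).layer = v.layer := rfl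

end DVertex

open DVertex

instance (L : ℕ) : DecidableRel (doubletChain L).Adj := fun p q =>
  inferInstanceAs (Decidable (p ≠ q ∧ _ ∧ _))

theorem doubletChain_adj_iff {L : ℕ} {v w : DVertex L} :
    (doubletChain L).Adj v w ↔ v ≠ w ∧ v.layer ≤ w.layer + 1 ∧ w.layer ≤ v.layer + 1 :=
  Iff.rfl

theorem numIndep_eq_card (L s : ℕ) : numIndep L s = #((doubletChain L).indepSetFinset s) := by
  rw [numIndep, ← Set.ncard_coe_finset]
  congr 1
  ext S
  simp [isIndepSet_iff_isIndepSet_coe, isNIndepSet_iff]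

def doubletChain.castLE {L L' : ℕ} (h : L ≤ L') : doubletChain L ↪g doubletChain L' where
  toEmbedding := DVertex.castLE h
  map_rel_iff' := by
    simp [doubletChain_adj_iff, (DVertex.castLE h).injective.ne_iff]

theorem doubletChain.range_castLE {L L' : ℕ} (h : L ≤ L') :
    Set.range (doubletChain.castLE h) = {v | v.layer < L} := by
  ext v
  constructor
  · rintro ⟨u, rfl⟩
    exact u.layer_lt
  · intro hv
    exact ⟨⟨(⟨v.layer, hv⟩, v.val.2), v.property⟩, ext_layer rfl rfl⟩

def layerFinset (L i : ℕ) : Finset (DVertex L) := {v | v.layer = i}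

theorem mem_layerFinset {L i : ℕ} {v : DVertex L} : v ∈ layerFinset L i ↔ v.layer = i := by
  simp [layerFinset]

theorem isClique_layerFinset (L i : ℕ) :
    (doubletChain L).IsClique (layerFinset L i : Set (DVertex L)) := by
  intro v hv w hw hvw
  rw [mem_coe, mem_layerFinset] at hv hw
  exact doubletChain_adj_iff.mpr ⟨hvw, by omega, by omega⟩

theorem card_layerFinset {L i : ℕ} (hi : i < L) :
    #(layerFinset L i) = if i % 2 = 1 then 2 else 1 := by
  let v₀ : DVertex L := ⟨(⟨i, hi⟩, false), nofun⟩
  split_ifs with hodd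
  · let v₁ : DVertex L := ⟨(⟨i, hi⟩, true), fun _ => hodd⟩
    have : layerFinset L i = {v₀, v₁} := by
      ext v
      rw [mem_layerFinset, mem_insert, mem_singleton]
      constructor
      · intro hv
        cases hb : v.val.2
        · exact .inl (ext_layer hv hb)
        · exact .inr (ext_layer hv hb)
      · rintro (rfl | rfl) <;> rfl
    rw [this, card_pair (by simp [v₀, v₁])]
  · have : layerFinset L i = {v₀} := by
      ext v
      rw [mem_layerFinset, mem_singleton]
      constructor
      · intro hv
        cases hb : v.val.2
        · exact ext_layer hv hb
        · exact absurd (hv ▸ v.property hb) hodd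
      · rintro rfl
        rfl
    rw [this, card_singleton]

theorem disjoint_layerFinset_iff {L : ℕ} {s : Finset (DVertex (L + 1))} :
    Disjoint s (layerFinset (L + 1) L) ↔
      ↑s ⊆ Set.range (doubletChain.castLE (Nat.le_succ L)) := by
  rw [doubletChain.range_castLE, disjoint_right]
  refine ⟨fun h v hv => ?_, fun h v hv hvs => ?_⟩
  · have := v.layer_lt
    have : v.layer ≠ L := fun hl => h (mem_layerFinset.mpr hl) hv
    exact show v.layer < L by omega
  · exact (h hvs : v.layer < L).ne (mem_layerFinset.mp hv)

theorem compl_insert_neighborSet_eq_range {L : ℕ} {v : DVertex (L + 1)} (hv : v.layer = L) :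
    (insert v ((doubletChain (L + 1)).neighborSet v))ᶜ =
      Set.range (doubletChain.castLE (show L - 1 ≤ L + 1 by omega)) := by
  rw [doubletChain.range_castLE]
  ext w
  have := w.layer_lt
  simp only [Set.mem_compl_iff, Set.mem_insert_iff, mem_neighborSet,
    doubletChain_adj_iff, Set.mem_ofPred_eq]
  constructor
  · intro h
    by_contra hw
    exact h (or_iff_not_imp_left.mpr fun hvw => ⟨Ne.symm hvw, by omega, by omega⟩)
  · rintro hw (rfl | ⟨-, h, -⟩) <;> omega

theorem numIndep_succ_succ (L n : ℕ) :
    numIndep (L + 1) (n + 1) =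
      numIndep L (n + 1) + (if L % 2 = 1 then 2 else 1) * numIndep (L - 1) n := by
  -- At `L = 0` the truncated `L - 1 = 0` is still right: there the closed neighbourhood of the
  -- only vertex is everything.
  classical
  rw [numIndep_eq_card, (isClique_layerFinset _ L).card_indepSetFinset_eq_add_sum,
    filter_congr fun s _ => disjoint_layerFinset_iff,
    Embedding.card_indepSetFinset_filter_subset_range, ← numIndep_eq_card,
    sum_congr rfl fun v hv => Embedding.card_indepSetFinset_succ_filter_mem_of_range_eq _
      (compl_insert_neighborSet_eq_range (mem_layerFinset.mp hv)).symm n,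
    sum_const, card_layerFinset (Nat.lt_succ_self L), smul_eq_mul, ← numIndep_eq_card]

theorem doubletChain.card_le_of_isIndepSet {L : ℕ} {s : Finset (DVertex L)}
    (hs : (doubletChain L).IsIndepSet (s : Set (DVertex L))) : #s ≤ (L + 1) / 2 := by
  have hinj : Set.InjOn (fun v : DVertex L => v.layer / 2) s := by
    intro v hv w hw hvw
    by_contra hne
    simp only at hvw
    exact hs hv hw hne (doubletChain_adj_iff.mpr ⟨hne, by omega, by omega⟩)
  simpa using card_le_card_of_injOn _ (fun v _ => mem_range.mpr (by have := v.layer_lt; omega)) hinj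

theorem numIndep_eq_zero_of_lt {L n : ℕ} (h : (L + 1) / 2 < n) : numIndep L n = 0 := by
  rw [numIndep_eq_card, card_eq_zero, eq_empty_iff_forall_notMem]
  intro s hs
  rw [mem_indepSetFinset_iff] at hs
  have := doubletChain.card_le_of_isIndepSet hs.isIndepSet
  have := hs.card_eq
  omega

theorem numIndep_zero (L : ℕ) : numIndep L 0 = 1 := by
  rw [numIndep_eq_card, indepSetFinset_zero, card_singleton]

theorem numIndep_two_mul_add_one_succ (m : ℕ) : numIndep (2 * m + 1) (m + 1) = 1 := by
  induction m with
  | zero => simp [numIndep_succ_succ 0 0, numIndep_zero, numIndep_eq_zero_of_lt]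
  | succ m ih =>
    rw [numIndep_succ_succ, if_neg (by omega), show 2 * (m + 1) - 1 = 2 * m + 1 by omega, ih,
      numIndep_eq_zero_of_lt (by omega)]

theorem numIndep_two_mul (m : ℕ) : numIndep (2 * m) m + 1 = 2 ^ (m + 1) := by
  induction m with
  | zero => simp [numIndep_zero]
  | succ m ih =>
    rw [show 2 * (m + 1) = 2 * m + 1 + 1 by ring, numIndep_succ_succ, if_pos (by omega),
      Nat.add_sub_cancel, numIndep_two_mul_add_one_succ, pow_succ]
    omega

theorem numIndep_two_mul_add_one (m : ℕ) : numIndep (2 * m + 1) m + (m + 3) = 2 ^ (m + 2) := by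
  induction m with
  | zero => simp [numIndep_zero]
  | succ m ih =>
    have hB : numIndep (2 * (m + 1)) (m + 1) + 1 = 2 ^ (m + 2) := numIndep_two_mul (m + 1)
    rw [numIndep_succ_succ, if_neg (by omega), show 2 * (m + 1) - 1 = 2 * m + 1 by omega,
      show 2 ^ (m + 1 + 2) = 2 * 2 ^ (m + 2) by ring]
    omega

theorem two_pow_le_numIndep (m : ℕ) : 2 ^ m ≤ numIndep (2 * m + 1) m := by
  have := numIndep_two_mul_add_one m
  have := m.lt_two_pow_self
  have : 2 ^ (m + 2) = 4 * 2 ^ m := by ring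
  omega

/-- For odd `L`, the number of independent sets of size `|MIS| - 1`
(with `|MIS| = (L+1)/2`) equals `2^((L+3)/2) - (L+5)/2`, and hence the degeneracy
ratio `D(|MIS|-1)/D(|MIS|)` grows exponentially in `L`. -/
theorem doubletChain_degeneracy :
    (∀ L : ℕ, Odd L → numIndep L ((L - 1) / 2) = 2 ^ ((L + 3) / 2) - (L + 5) / 2) ∧
    ∃ c : ℝ, 1 < c ∧ ∃ C : ℝ, 0 < C ∧ ∀ L : ℕ, Odd L →
      C * c ^ L ≤ (numIndep L ((L - 1) / 2) : ℝ) / (numIndep L ((L + 1) / 2) : ℝ) := by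
  refine ⟨?_, √2, Real.one_lt_sqrt_two, 1 / 2, one_half_pos, ?_⟩
  · rintro L ⟨m, rfl⟩
    have := numIndep_two_mul_add_one m
    rw [show (2 * m + 1 - 1) / 2 = m by omega, show (2 * m + 1 + 3) / 2 = m + 2 by omega]
    omega
  · rintro L ⟨m, rfl⟩
    rw [show (2 * m + 1 - 1) / 2 = m by omega, show (2 * m + 1 + 1) / 2 = m + 1 by omega,
      numIndep_two_mul_add_one_succ, Nat.cast_one, div_one]
    have hsqrt : √2 / 2 ≤ 1 := by
      rw [div_le_one two_pos, Real.sqrt_le_iff]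
      norm_num
    calc 1 / 2 * √2 ^ (2 * m + 1) = 2 ^ m * (√2 / 2) := by
          rw [pow_succ, pow_mul, Real.sq_sqrt zero_le_two]
          ring
      _ ≤ 2 ^ m := mul_le_of_le_one_right (by positivity) hsqrt
      _ ≤ numIndep (2 * m + 1) m := by exact_mod_cast two_pow_le_numIndep m
end

section
/- For an independent set S of the doublet chain graph with odd chain length L that has size |MIS|-1 and contains no odd-indexed (singleton) vertex, S must contain exactly one vertex from each of the (L-1)/2 doublets; consequently there are exactly 2^{(L-1)/2} such independent sets. -/
/-!
In an independent set of `doubletChain L` whose vertices all lie at doublet positions (the odd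
indices of `Fin L`, i.e. the paper's even positions), two vertices at the same position would be
adjacent, while vertices at distinct doublet positions never are. So such a set is exactly an
injective choice of positions; having as many vertices as there are doublets, it meets every
doublet exactly once, and is then determined by which of the two vertices it picks in each
doublet.
-/

open Finset

lemma card_filter_fin_val_mod_two_eq_one (L : ℕ) : #{i : Fin L | i.val % 2 = 1} = L / 2 := by
  rw [← Nat.card_multiples L 2, ← card_map Fin.valEmbedding]
  congr 1
  ext e
  simp only [mem_map, mem_filter, mem_univ, true_and, Fin.valEmbedding_apply, mem_range]
  constructor
  · rintro ⟨i, hi, rfl⟩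
    exact ⟨i.isLt, by omega⟩
  · rintro ⟨he, hdvd⟩
    exact ⟨⟨e, he⟩, by dsimp only; omega, rfl⟩

abbrev DoubletPos (L : ℕ) := {i : Fin L // i.val % 2 = 1}

lemma card_doubletPos (L : ℕ) : Fintype.card (DoubletPos L) = L / 2 := by
  rw [Fintype.card_subtype, card_filter_fin_val_mod_two_eq_one]

variable {L : ℕ}

lemma doubletChain_adj_of_fst_eq {v w : DVertex L} (hne : v ≠ w) (h : v.val.1 = w.val.1) :
    (doubletChain L).Adj v w :=
  ⟨hne, by rw [h]; omega, by rw [h]; omega⟩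

lemma doubletChain_not_adj_of_odd {v w : DVertex L} (hv : v.val.1.val % 2 = 1)
    (hw : w.val.1.val % 2 = 1) (hne : v.val.1 ≠ w.val.1) : ¬ (doubletChain L).Adj v w := by
  rintro ⟨-, hvw, hwv⟩
  exact hne (Fin.ext (by omega))

lemma isIndepSet_doubletChain_iff_injOn {S : Finset (DVertex L)}
    (hS : ∀ v ∈ S, v.val.1.val % 2 = 1) :
    IsIndepSet (doubletChain L) S ↔ Set.InjOn (fun v : DVertex L => v.val.1) S := by
  constructor
  · intro hind v hv w hw h
    by_contra hne
    exact hind v hv w hw (doubletChain_adj_of_fst_eq hne h)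
  · intro hinj v hv w hw hadj
    by_cases h : v.val.1 = w.val.1
    · exact hadj.ne (hinj hv hw h)
    · exact doubletChain_not_adj_of_odd (hS v hv) (hS w hw) h hadj

lemma existsUnique_mem_of_isIndepSet {S : Finset (DVertex L)}
    (hind : IsIndepSet (doubletChain L) S) (hcard : #S = L / 2)
    (hS : ∀ v ∈ S, v.val.1.val % 2 = 1) (i : Fin L) (hi : i.val % 2 = 1) :
    ∃! v : DVertex L, v ∈ S ∧ v.val.1 = i := by
  have hinj := (isIndepSet_doubletChain_iff_injOn hS).1 hind
  have hsurj := surjOn_of_injOn_of_card_le (t := {i : Fin L | i.val % 2 = 1}) _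
    (fun v hv => by simpa using hS v hv) hinj
    (by rw [card_filter_fin_val_mod_two_eq_one, hcard])
  obtain ⟨v, hv, rfl⟩ := hsurj (by simpa using hi)
  exact ⟨v, ⟨hv, rfl⟩, fun w ⟨hw, hwv⟩ => hinj hw hv hwv⟩

def doubletVertex (i : DoubletPos L) (b : Bool) : DVertex L :=
  ⟨(i.val, b), fun _ => i.property⟩

lemma doubletVertex_inj {i j : DoubletPos L} {b c : Bool} :
    doubletVertex i b = doubletVertex j c ↔ i = j ∧ b = c := by
  simp [doubletVertex, Subtype.ext_iff]

def doubletChoice (f : DoubletPos L → Bool) : Finset (DVertex L) :=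
  univ.image fun i => doubletVertex i (f i)

lemma doubletChoice_injective : Function.Injective (doubletChoice (L := L)) := by
  intro f g hfg
  funext i
  have hi : doubletVertex i (f i) ∈ doubletChoice g := hfg ▸ mem_image_of_mem _ (mem_univ i)
  obtain ⟨j, -, hj⟩ := mem_image.1 hi
  obtain ⟨rfl, hb⟩ := doubletVertex_inj.1 hj
  exact hb.symm

lemma fst_odd_of_mem_doubletChoice {f : DoubletPos L → Bool} {v : DVertex L}
    (hv : v ∈ doubletChoice f) : v.val.1.val % 2 = 1 := by
  obtain ⟨i, -, rfl⟩ := mem_image.1 hv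
  exact i.property

lemma isIndepSet_doubletChoice (f : DoubletPos L → Bool) :
    IsIndepSet (doubletChain L) (doubletChoice f) := by
  rw [isIndepSet_doubletChain_iff_injOn fun v => fst_odd_of_mem_doubletChoice]
  rintro _ hv _ hw h
  obtain ⟨i, -, rfl⟩ := mem_image.1 hv
  obtain ⟨j, -, rfl⟩ := mem_image.1 hw
  obtain rfl : i = j := Subtype.ext h
  rfl

lemma card_doubletChoice (f : DoubletPos L → Bool) : #(doubletChoice f) = L / 2 := by
  rw [doubletChoice, card_image_of_injective _ fun i j h => (doubletVertex_inj.1 h).1,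
    card_univ, card_doubletPos]

lemma exists_eq_doubletChoice {S : Finset (DVertex L)} (hS : ∀ v ∈ S, v.val.1.val % 2 = 1)
    (huniq : ∀ i : Fin L, i.val % 2 = 1 → ∃! v : DVertex L, v ∈ S ∧ v.val.1 = i) :
    ∃ f, doubletChoice f = S := by
  choose w hwS hwi using fun i : DoubletPos L => (huniq i.val i.property).exists
  have hw : ∀ i, doubletVertex i (w i).val.2 = w i := fun i =>
    Subtype.ext (Prod.ext (hwi i).symm rfl)
  refine ⟨fun i => (w i).val.2, ?_⟩
  ext v
  simp only [doubletChoice, mem_image, mem_univ, true_and, hw]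
  constructor
  · rintro ⟨i, rfl⟩
    exact hwS i
  · intro hv
    exact ⟨⟨v.val.1, hS v hv⟩, (huniq _ (hS v hv)).unique ⟨hwS _, hwi _⟩ ⟨hv, rfl⟩⟩

lemma setOf_isIndepSet_eq_range_doubletChoice :
    {S : Finset (DVertex L) | IsIndepSet (doubletChain L) S ∧
        #S = L / 2 ∧ ∀ v ∈ S, v.val.1.val % 2 = 1} = Set.range doubletChoice := by
  ext S
  constructor
  · rintro ⟨hind, hcard, hS⟩
    exact exists_eq_doubletChoice hS (existsUnique_mem_of_isIndepSet hind hcard hS)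
  · rintro ⟨f, rfl⟩
    exact ⟨isIndepSet_doubletChoice f, card_doubletChoice f,
      fun _ => fst_odd_of_mem_doubletChoice⟩

/-- For odd `L`, an independent set of the chain of diamonds of size
`|MIS| - 1 = (L-1)/2` containing no singleton (paper-odd-position, i.e. 0-indexed
even position) vertex contains exactly one vertex from each of the `(L-1)/2`
doublets; consequently there are exactly `2^((L-1)/2)` such independent sets. -/
theorem doubletChain_doublet_choices (L : ℕ) (hL : Odd L) :
    (∀ S : Finset (DVertex L), IsIndepSet (doubletChain L) S → S.card = (L - 1) / 2 →
      (∀ v ∈ S, v.val.1.val % 2 = 1) →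
      ∀ i : Fin L, i.val % 2 = 1 → ∃! v : DVertex L, v ∈ S ∧ v.val.1 = i) ∧
    Set.ncard {S : Finset (DVertex L) | IsIndepSet (doubletChain L) S ∧
        S.card = (L - 1) / 2 ∧ ∀ v ∈ S, v.val.1.val % 2 = 1} = 2 ^ ((L - 1) / 2) := by
  have hhalf : (L - 1) / 2 = L / 2 := by
    obtain ⟨k, rfl⟩ := hL
    omega
  rw [hhalf, setOf_isIndepSet_eq_range_doubletChoice,
    Set.ncard_range_of_injective doubletChoice_injective, Nat.card_eq_fintype_card,
    Fintype.card_fun, Fintype.card_bool, card_doubletPos]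
  exact ⟨fun S => existsUnique_mem_of_isIndepSet, rfl⟩
end

section
/- Define mean-field energies E_Z2(L, delta, Omega) = -(L+1)/4 * (delta + sqrt(4 Omega^2 + delta^2)) and E_Z2bar(L, delta, Omega, k) = -(L-1)/4 * (delta + sqrt(4 k^2 Omega^2 + delta^2)) with k = sqrt(2) and Omega > 0. Then the crossing point delta_crit where E_Z2 = E_Z2bar satisfies delta_crit = Theta(sqrt(L) * Omega) as L tends to infinity; in particular delta_crit / Omega tends to infinity proportionally to sqrt(L). -/
/-!
Write `a = √(4Ω² + δ²)` and `b = √(8Ω² + δ²)`. Since `b - a = 4Ω² / (a + b)`, the crossing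
condition `(L + 1)(δ + a) = (L - 1)(δ + b)` is equivalent to `2(L - 1)Ω² = (δ + a)(a + b)`.
For `δ ≥ 0` the right-hand side is continuous and squeezed between `4δ²` and `(2δ + 5Ω)²`,
which gives both the existence of a positive crossing point and `δ_crit² ≍ L Ω²`.
-/

open Real

lemma add_one_mul_eq_sub_one_mul_iff {L δ a b : ℝ} (hab : 0 < a + b) :
    (L + 1) * (δ + a) = (L - 1) * (δ + b) ↔
      (L - 1) * (b ^ 2 - a ^ 2) = 2 * ((δ + a) * (a + b)) := by
  constructor
  · intro h
    linear_combination -(a + b) * h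
  · intro h
    refine mul_right_cancel₀ hab.ne' ?_
    linear_combination -h

noncomputable def crossingProduct (Ω δ : ℝ) : ℝ :=
  (δ + √(4 * Ω ^ 2 + δ ^ 2)) * (√(4 * Ω ^ 2 + δ ^ 2) + √(4 * 2 * Ω ^ 2 + δ ^ 2))

lemma continuous_crossingProduct (Ω : ℝ) : Continuous (crossingProduct Ω) := by
  unfold crossingProduct
  fun_prop

lemma meanField_energy_eq_iff {Ω : ℝ} (hΩ : 0 < Ω) (L δ : ℝ) :
    -(L + 1) / 4 * (δ + √(4 * Ω ^ 2 + δ ^ 2)) =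
        -(L - 1) / 4 * (δ + √(4 * 2 * Ω ^ 2 + δ ^ 2)) ↔
      2 * (L - 1) * Ω ^ 2 = crossingProduct Ω δ := by
  rw [crossingProduct]
  set a := √(4 * Ω ^ 2 + δ ^ 2)
  set b := √(4 * 2 * Ω ^ 2 + δ ^ 2)
  have hab : 0 < a + b := add_pos_of_pos_of_nonneg (sqrt_pos.2 (by positivity)) (sqrt_nonneg _)
  have hdiff : b ^ 2 - a ^ 2 = 4 * Ω ^ 2 := by
    rw [sq_sqrt (by positivity), sq_sqrt (by positivity)]
    ring
  calc _ ↔ (L + 1) * (δ + a) = (L - 1) * (δ + b) := by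
        constructor
        · intro h; linear_combination (-4 : ℝ) * h
        · intro h; linear_combination (-1 / 4 : ℝ) * h
    _ ↔ (L - 1) * (b ^ 2 - a ^ 2) = 2 * ((δ + a) * (a + b)) :=
        add_one_mul_eq_sub_one_mul_iff hab
    _ ↔ _ := by
        rw [hdiff]
        constructor
        · intro h; linear_combination (1 / 2 : ℝ) * h
        · intro h; linear_combination 2 * h

lemma four_mul_sq_le_crossingProduct (Ω : ℝ) {δ : ℝ} (hδ : 0 ≤ δ) :
    4 * δ ^ 2 ≤ crossingProduct Ω δ := by
  have ha : δ ≤ √(4 * Ω ^ 2 + δ ^ 2) := le_sqrt_of_sq_le (by nlinarith)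
  have hb : δ ≤ √(4 * 2 * Ω ^ 2 + δ ^ 2) := le_sqrt_of_sq_le (by nlinarith)
  calc 4 * δ ^ 2 = (δ + δ) * (δ + δ) := by ring
    _ ≤ crossingProduct Ω δ := by unfold crossingProduct; gcongr

lemma crossingProduct_le {Ω δ : ℝ} (hΩ : 0 ≤ Ω) (hδ : 0 ≤ δ) :
    crossingProduct Ω δ ≤ (2 * δ + 5 * Ω) ^ 2 := by
  have ha : √(4 * Ω ^ 2 + δ ^ 2) ≤ δ + 2 * Ω :=
    (sqrt_le_left (by positivity)).2 (by nlinarith)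
  have hb : √(4 * 2 * Ω ^ 2 + δ ^ 2) ≤ δ + 3 * Ω :=
    (sqrt_le_left (by positivity)).2 (by nlinarith)
  calc crossingProduct Ω δ ≤ (δ + (δ + 2 * Ω)) * ((δ + 2 * Ω) + (δ + 3 * Ω)) := by
        unfold crossingProduct; gcongr
    _ ≤ (2 * δ + 5 * Ω) ^ 2 := by nlinarith

lemma exists_pos_crossingProduct_eq {Ω L : ℝ} (hΩ : 0 < Ω) (hL : 14 ≤ L) :
    ∃ δ, 0 < δ ∧ 2 * (L - 1) * Ω ^ 2 = crossingProduct Ω δ := by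
  have hzero : crossingProduct Ω 0 < 2 * (L - 1) * Ω ^ 2 := by
    have := crossingProduct_le hΩ.le le_rfl
    nlinarith
  have hfar : 2 * (L - 1) * Ω ^ 2 ≤ crossingProduct Ω (L * Ω) := by
    have := four_mul_sq_le_crossingProduct Ω (show 0 ≤ L * Ω by positivity)
    nlinarith
  obtain ⟨δ, hδ, hδeq⟩ := intermediate_value_Icc (by positivity)
    (continuous_crossingProduct Ω).continuousOn ⟨hzero.le, hfar⟩
  refine ⟨δ, lt_of_le_of_ne hδ.1 ?_, hδeq.symm⟩
  rintro rfl
  exact hzero.ne hδeq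

lemma le_sqrt_mul_of_crossingProduct_eq {Ω L δ : ℝ} (hΩ : 0 ≤ Ω) (hL : 0 ≤ L) (hδ : 0 ≤ δ)
    (h : 2 * (L - 1) * Ω ^ 2 = crossingProduct Ω δ) : δ ≤ √L * Ω := by
  have := four_mul_sq_le_crossingProduct Ω hδ
  rw [← sqrt_sq hΩ, ← sqrt_mul hL]
  exact le_sqrt_of_sq_le (by nlinarith)

lemma sqrt_mul_le_of_crossingProduct_eq {Ω L δ : ℝ} (hΩ : 0 < Ω) (hL : 26 ≤ L) (hδ : 0 ≤ δ)
    (h : 2 * (L - 1) * Ω ^ 2 = crossingProduct Ω δ) : √L * Ω ≤ 7 * δ := by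
  have hup : 2 * (L - 1) * Ω ^ 2 ≤ (2 * δ + 5 * Ω) ^ 2 := h ▸ crossingProduct_le hΩ.le hδ
  -- otherwise `(2δ + 5Ω)² < 49Ω² < 2(L - 1)Ω²`
  have hΩδ : Ω ≤ δ := by
    by_contra! hlt
    nlinarith
  rw [← sqrt_sq hΩ.le, ← sqrt_mul (by linarith), ← sqrt_sq (by positivity : 0 ≤ 7 * δ)]
  exact sqrt_le_sqrt (by nlinarith)

/-- For the mean-field energies
`E_Z2(L,δ,Ω) = -(L+1)/4 (δ + √(4Ω² + δ²))` and
`E_Z2bar(L,δ,Ω) = -(L-1)/4 (δ + √(4k²Ω² + δ²))` with `k = √2` (so `4k²Ω² = 8Ω²`)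
and `Ω > 0`, the crossing point `δ_crit > 0` where the two energies are equal
exists for all sufficiently large `L` and satisfies `δ_crit = Θ(√L · Ω)`. -/
theorem meanField_crossing (Ω : ℝ) (hΩ : 0 < Ω) :
    ∃ c₁ c₂ : ℝ, 0 < c₁ ∧ 0 < c₂ ∧ ∃ L₀ : ℕ, ∀ L : ℕ, L₀ ≤ L →
      (∃ δ : ℝ, 0 < δ ∧
        -((L : ℝ) + 1) / 4 * (δ + Real.sqrt (4 * Ω ^ 2 + δ ^ 2)) =
          -((L : ℝ) - 1) / 4 * (δ + Real.sqrt (4 * 2 * Ω ^ 2 + δ ^ 2))) ∧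
      ∀ δ : ℝ, 0 < δ →
        -((L : ℝ) + 1) / 4 * (δ + Real.sqrt (4 * Ω ^ 2 + δ ^ 2)) =
          -((L : ℝ) - 1) / 4 * (δ + Real.sqrt (4 * 2 * Ω ^ 2 + δ ^ 2)) →
        c₁ * Real.sqrt L * Ω ≤ δ ∧ δ ≤ c₂ * Real.sqrt L * Ω := by
  refine ⟨1 / 7, 1, by norm_num, by norm_num, 26, fun L hL => ⟨?_, fun δ hδ heq => ?_⟩⟩
  all_goals have hL' : (26 : ℝ) ≤ L := by exact_mod_cast hL
  · obtain ⟨δ, hδ, hcross⟩ := exists_pos_crossingProduct_eq hΩ (by linarith : (14 : ℝ) ≤ L)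
    exact ⟨δ, hδ, (meanField_energy_eq_iff hΩ L δ).2 hcross⟩
  · rw [meanField_energy_eq_iff hΩ] at heq
    have hlow := sqrt_mul_le_of_crossingProduct_eq hΩ hL' hδ.le heq
    have hhigh := le_sqrt_mul_of_crossingProduct_eq hΩ.le (by linarith) hδ.le heq
    constructor <;> linarith
end

section
/- Let M be an m x m real symmetric matrix whose sorted diagonal has largest entry k^2(K-1) and second-largest entry k^2(K-2)+1, where the row containing the largest diagonal entry has exactly two nonzero off-diagonal entries each equal to k, the row of the second-largest diagonal entry has exactly three nonzero off-diagonal entries each equal to k, and all other Gershgorin discs are disjoint from the disc D(k^2(K-1), 2k). If k > (sqrt(29)+5)/2, then the discs D(k^2(K-1), 2k) and D(k^2(K-2)+1, 3k) are disjoint, and hence the largest eigenvalue of M lies in the interval [k^2(K-1) - 2k, k^2(K-1) + 2k]. -/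
/-!
The largest eigenvalue `λ` of a real symmetric matrix is at least every diagonal entry, in
particular `λ ≥ k²(K-1)`. By Gershgorin's theorem `λ` lies in some disc. For `k² - 5k - 1 > 0`,
i.e. `k > (5 + √29)/2`, the disc `D(k²(K-2)+1, 3k)` lies strictly to the left of
`D(k²(K-1), 2k)`, and so does every other disc, which avoids `D(k²(K-1), 2k)` while having
its centre at most `k²(K-1)`. Hence `λ` can only lie in `D(k²(K-1), 2k)`.
-/

open Finset

namespace Set

lemma lt_of_disjoint_Icc {α : Type*} [LinearOrder α] {a b c d : α}
    (h : Disjoint (Icc a b) (Icc c d)) (hab : a ≤ b) (hcd : c ≤ d) (had : a ≤ d) : b < c := by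
  by_contra! hcb
  have hac : max a c ∈ Icc a b := ⟨le_max_left _ _, max_le hab hcb⟩
  exact disjoint_left.mp h hac ⟨le_max_right _ _, max_le had hcd⟩

end Set

namespace Matrix

variable {n : Type*} [Fintype n] [DecidableEq n]

open scoped MatrixOrder ComplexOrder in
lemma IsHermitian.re_diag_le_of_eigenvalues_le {𝕜 : Type*} [RCLike 𝕜] {A : Matrix n n 𝕜}
    (hA : A.IsHermitian) {r : ℝ} (hr : ∀ j, hA.eigenvalues j ≤ r) (i : n) :
    RCLike.re (A i i) ≤ r := by
  have hle : A ≤ algebraMap ℝ _ r := le_algebraMap_of_spectrum_le (by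
    rw [hA.spectrum_real_eq_range_eigenvalues]
    rintro _ ⟨j, rfl⟩
    exact hr j) hA
  have := (RCLike.nonneg_iff.mp ((le_iff.mp hle).diag_nonneg (i := i))).1
  simpa [algebraMap_matrix_apply] using this

lemma IsHermitian.hasEigenvalue_eigenvalues {A : Matrix n n ℝ} (hA : A.IsHermitian) (i : n) :
    Module.End.HasEigenvalue (toLin' A) (hA.eigenvalues i) :=
  .of_mem_spectrum (by rw [spectrum_toLin']; exact hA.eigenvalues_mem_spectrum_real i)

lemma sum_abs_offDiag_row_eq_card_mul (A : Matrix n n ℝ) (i : n) {k : ℝ}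
    (hk : ∀ j, j ≠ i → A i j ≠ 0 → A i j = k) :
    ∑ j ∈ univ.erase i, |A i j| = #{j | j ≠ i ∧ A i j ≠ 0} * |k| := by
  have hsupp : ({j | j ≠ i ∧ A i j ≠ 0} : Finset n) = {j ∈ univ.erase i | |A i j| ≠ 0} := by
    ext j
    simp
  rw [← sum_filter_ne_zero, ← hsupp, sum_congr rfl fun j hj => ?_, sum_const, nsmul_eq_mul]
  simp only [mem_filter, mem_univ, true_and] at hj
  rw [hk j hj.1 hj.2]

lemma eigenvalue_mem_Icc_of_lt {A : Matrix n n ℝ} {μ : ℝ}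
    (hμ : Module.End.HasEigenvalue (toLin' A) μ) {i : n}
    (h : ∀ j, j ≠ i → A j j + ∑ l ∈ univ.erase j, |A j l| < μ) :
    μ ∈ Set.Icc (A i i - ∑ l ∈ univ.erase i, |A i l|) (A i i + ∑ l ∈ univ.erase i, |A i l|) := by
  obtain ⟨j, hj⟩ := eigenvalue_mem_ball hμ
  simp only [Real.norm_eq_abs, Real.closedBall_eq_Icc] at hj
  obtain rfl | hji := eq_or_ne j i
  · exact hj
  · exact absurd hj.2 (h j hji).not_ge

end Matrix

lemma five_mul_add_one_lt_sq {k : ℝ} (hk : (Real.sqrt 29 + 5) / 2 < k) : 5 * k + 1 < k ^ 2 := by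
  have h29 : Real.sqrt 29 ^ 2 = 29 := Real.sq_sqrt (by norm_num)
  have hroot : Real.sqrt 29 < 2 * k - 5 := by linarith
  nlinarith [mul_pos (sub_pos.mpr hroot) (show 0 < 2 * k - 5 + Real.sqrt 29 by
    linarith [Real.sqrt_nonneg 29])]

theorem gershgorin_largest_eigenvalue_general (m : ℕ) (M : Matrix (Fin m) (Fin m) ℝ)
    (hM : M.IsHermitian) (k K : ℝ) (hk : (Real.sqrt 29 + 5) / 2 < k)
    (i₀ i₁ : Fin m)
    (hd₀ : M i₀ i₀ = k ^ 2 * (K - 1)) (hd₁ : M i₁ i₁ = k ^ 2 * (K - 2) + 1)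
    (hdiagmax : ∀ i, M i i ≤ k ^ 2 * (K - 1))
    (hrow₀card : (Finset.univ.filter fun j => j ≠ i₀ ∧ M i₀ j ≠ 0).card = 2)
    (hrow₀val : ∀ j, j ≠ i₀ → M i₀ j ≠ 0 → M i₀ j = k)
    (hrow₁card : (Finset.univ.filter fun j => j ≠ i₁ ∧ M i₁ j ≠ 0).card = 3)
    (hrow₁val : ∀ j, j ≠ i₁ → M i₁ j ≠ 0 → M i₁ j = k)
    (hdisj : ∀ i, i ≠ i₀ → i ≠ i₁ →
      Disjoint
        (Set.Icc (M i i - ∑ j ∈ Finset.univ.erase i, |M i j|)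
          (M i i + ∑ j ∈ Finset.univ.erase i, |M i j|))
        (Set.Icc (k ^ 2 * (K - 1) - 2 * k) (k ^ 2 * (K - 1) + 2 * k))) :
    Disjoint (Set.Icc (k ^ 2 * (K - 1) - 2 * k) (k ^ 2 * (K - 1) + 2 * k))
        (Set.Icc (k ^ 2 * (K - 2) + 1 - 3 * k) (k ^ 2 * (K - 2) + 1 + 3 * k)) ∧
    ∃ i : Fin m, (∀ j, hM.eigenvalues j ≤ hM.eigenvalues i) ∧
      hM.eigenvalues i ∈ Set.Icc (k ^ 2 * (K - 1) - 2 * k) (k ^ 2 * (K - 1) + 2 * k) := by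
  have hk0 : 0 < k := by linarith [Real.sqrt_nonneg 29]
  have hgap : k ^ 2 * (K - 2) + 1 + 3 * k < k ^ 2 * (K - 1) - 2 * k := by
    linarith [five_mul_add_one_lt_sq hk]
  refine ⟨Set.disjoint_left.2 fun _ h₀ h₁ => by linarith [h₀.1, h₁.2], ?_⟩
  have : Nonempty (Fin m) := ⟨i₀⟩
  obtain ⟨i, hmax⟩ := Finite.exists_max hM.eigenvalues
  refine ⟨i, hmax, ?_⟩
  have hdiag_le : k ^ 2 * (K - 1) ≤ hM.eigenvalues i := by
    simpa [hd₀] using hM.re_diag_le_of_eigenvalues_le hmax i₀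
  have hrow {i : Fin m} (hval : ∀ j, j ≠ i → M i j ≠ 0 → M i j = k) :=
    M.sum_abs_offDiag_row_eq_card_mul i hval
  rw [abs_of_pos hk0] at hrow
  have hleft : ∀ j, j ≠ i₀ → M j j + ∑ l ∈ univ.erase j, |M j l| < hM.eigenvalues i := by
    intro j hj₀
    obtain rfl | hj₁ := eq_or_ne j i₁
    · rw [hrow hrow₁val, hrow₁card, hd₁]
      push_cast
      linarith
    · have hR : 0 ≤ ∑ l ∈ univ.erase j, |M j l| := sum_nonneg fun _ _ => abs_nonneg _
      have := Set.lt_of_disjoint_Icc (hdisj j hj₀ hj₁) (by linarith) (by linarith)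
        (by linarith [hdiagmax j])
      linarith
  have hmem := M.eigenvalue_mem_Icc_of_lt (hM.hasEigenvalue_eigenvalues i) hleft
  rw [hrow hrow₀val, hrow₀card, hd₀] at hmem
  exact_mod_cast hmem

/-- Gershgorin localization of the largest eigenvalue. For a real
symmetric `m × m` matrix whose largest diagonal entry is `k²(K-1)` (at row `i₀`)
and second-largest is `k²(K-2)+1` (at row `i₁`), where row `i₀` has exactly two
nonzero off-diagonal entries each equal to `k`, row `i₁` has exactly three nonzero
off-diagonal entries each equal to `k`, and every other Gershgorin disc is disjoint
from `D(k²(K-1), 2k)`: if `k > (√29 + 5)/2`, then `D(k²(K-1), 2k)` and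
`D(k²(K-2)+1, 3k)` are disjoint, and the largest eigenvalue of `M` lies in
`[k²(K-1) - 2k, k²(K-1) + 2k]`. -/
theorem gershgorin_largest_eigenvalue (m : ℕ) (M : Matrix (Fin m) (Fin m) ℝ)
    (hM : M.IsHermitian) (k K : ℝ) (hk : (Real.sqrt 29 + 5) / 2 < k) (hK : 2 ≤ K)
    (i₀ i₁ : Fin m) (hne : i₀ ≠ i₁)
    (hd₀ : M i₀ i₀ = k ^ 2 * (K - 1)) (hd₁ : M i₁ i₁ = k ^ 2 * (K - 2) + 1)
    (hdiagmax : ∀ i, M i i ≤ k ^ 2 * (K - 1))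
    (hdiag2 : ∀ i, i ≠ i₀ → M i i ≤ k ^ 2 * (K - 2) + 1)
    (hrow₀card : (Finset.univ.filter fun j => j ≠ i₀ ∧ M i₀ j ≠ 0).card = 2)
    (hrow₀val : ∀ j, j ≠ i₀ → M i₀ j ≠ 0 → M i₀ j = k)
    (hrow₁card : (Finset.univ.filter fun j => j ≠ i₁ ∧ M i₁ j ≠ 0).card = 3)
    (hrow₁val : ∀ j, j ≠ i₁ → M i₁ j ≠ 0 → M i₁ j = k)
    (hdisj : ∀ i, i ≠ i₀ → i ≠ i₁ →
      Disjoint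
        (Set.Icc (M i i - ∑ j ∈ Finset.univ.erase i, |M i j|)
          (M i i + ∑ j ∈ Finset.univ.erase i, |M i j|))
        (Set.Icc (k ^ 2 * (K - 1) - 2 * k) (k ^ 2 * (K - 1) + 2 * k))) :
    Disjoint (Set.Icc (k ^ 2 * (K - 1) - 2 * k) (k ^ 2 * (K - 1) + 2 * k))
        (Set.Icc (k ^ 2 * (K - 2) + 1 - 3 * k) (k ^ 2 * (K - 2) + 1 + 3 * k)) ∧
    ∃ i : Fin m, (∀ j, hM.eigenvalues j ≤ hM.eigenvalues i) ∧
      hM.eigenvalues i ∈ Set.Icc (k ^ 2 * (K - 1) - 2 * k) (k ^ 2 * (K - 1) + 2 * k) :=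
  gershgorin_largest_eigenvalue_general m M hM k K hk i₀ i₁ hd₀ hd₁ hdiagmax hrow₀card hrow₀val
    hrow₁card hrow₁val hdisj
end

section
/- Consider the three-level Hamiltonian H on span{|gg>, |gr>, |rg>} with H|gg> = Omega|rg> + k Omega|gr>, H|gr> = k Omega|gg>, H|rg> = Omega|gg> (i.e., matrix entries <gg|H|gr> = k Omega, <gg|H|rg> = Omega, all diagonal entries zero). Then for the initial state |gr>, the time-evolved state exp(-i H t)|gr> has components: amplitude on |gg> equal to (-ik sin(sqrt(1+k^2) Omega t))/sqrt(1+k^2), amplitude on |gr> equal to (1 + k^2 cos(sqrt(1+k^2) Omega t))/(1+k^2), and amplitude on |rg> equal to (-k + k cos(sqrt(1+k^2) Omega t))/(1+k^2). -/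
/-!
The state `k|gr⟩ + |rg⟩` is the only combination of `|gr⟩, |rg⟩` that `H` couples to `|gg⟩`,
with Rabi frequency `ω = √(1+k²) Ω`; the orthogonal dark state `|gr⟩ - k|rg⟩` is annihilated by `H`.
Decomposing `|gr⟩ = (k (k|gr⟩ + |rg⟩) + (|gr⟩ - k|rg⟩)) / (1+k²)` gives the stated amplitudes,
which are then checked directly against the Schrödinger equation.
-/

open Complex

theorem HasDerivAt.vecCons₃ {𝕜 E : Type*} [NontriviallyNormedField 𝕜] [NormedAddCommGroup E]
    [NormedSpace 𝕜 E] {f g h : 𝕜 → E} {f' g' h' : E} {x : 𝕜} (hf : HasDerivAt f f' x)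
    (hg : HasDerivAt g g' x) (hh : HasDerivAt h h' x) :
    HasDerivAt (fun x => ![f x, g x, h x]) ![f', g', h'] x :=
  hf.finCons <| hg.finCons <| hh.finCons <|
    Subsingleton.elim (0 : Fin 0 → E) ![] ▸ hasDerivAt_const x ![]

theorem Matrix.mulVec_arrowhead₃ {R : Type*} [NonUnitalNonAssocSemiring R] (a b x y z : R) :
    Matrix.mulVec !![0, a, b; a, 0, 0; b, 0, 0] ![x, y, z] = ![a * y + b * z, a * x, b * x] := by
  ext i
  fin_cases i <;> simp [Matrix.mulVec, dotProduct, Fin.sum_univ_three]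

theorem hasDerivAt_ofReal_sin_mul (ω t : ℝ) :
    HasDerivAt (fun t : ℝ => ((Real.sin (ω * t) : ℝ) : ℂ)) (ω * Real.cos (ω * t)) t := by
  simpa [mul_comm] using (((hasDerivAt_id t).const_mul ω).sin).ofReal_comp

theorem hasDerivAt_ofReal_cos_mul (ω t : ℝ) :
    HasDerivAt (fun t : ℝ => ((Real.cos (ω * t) : ℝ) : ℂ)) (-(ω * Real.sin (ω * t))) t := by
  simpa [mul_comm] using (((hasDerivAt_id t).const_mul ω).cos).ofReal_comp

/-- Dimer-model quench dynamics. For the three-level Hamiltonian on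
`span{|gg⟩, |gr⟩, |rg⟩}` (basis indices `0, 1, 2`) with couplings
`⟨gg|H|gr⟩ = kΩ`, `⟨gg|H|rg⟩ = Ω` and zero diagonal, the solution of the
Schrödinger equation `ψ' = -i H ψ` with `ψ(0) = |gr⟩` has amplitudes
`ψ_gg(t) = -i k sin(√(1+k²) Ω t)/√(1+k²)`,
`ψ_gr(t) = (1 + k² cos(√(1+k²) Ω t))/(1+k²)` and
`ψ_rg(t) = (-k + k cos(√(1+k²) Ω t))/(1+k²)`. -/
theorem dimer_quench_dynamics (k Ω : ℝ) :
    let H : Matrix (Fin 3) (Fin 3) ℂ :=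
      !![0, ((k * Ω : ℝ) : ℂ), ((Ω : ℝ) : ℂ);
         ((k * Ω : ℝ) : ℂ), 0, 0;
         ((Ω : ℝ) : ℂ), 0, 0]
    let ω : ℝ := Real.sqrt (1 + k ^ 2) * Ω
    let ψ : ℝ → Fin 3 → ℂ := fun t =>
      ![-Complex.I * (k : ℂ) * ((Real.sin (ω * t) : ℝ) : ℂ) / ((Real.sqrt (1 + k ^ 2) : ℝ) : ℂ),
        (1 + (k : ℂ) ^ 2 * ((Real.cos (ω * t) : ℝ) : ℂ)) / (1 + (k : ℂ) ^ 2),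
        (-(k : ℂ) + (k : ℂ) * ((Real.cos (ω * t) : ℝ) : ℂ)) / (1 + (k : ℂ) ^ 2)]
    ψ 0 = ![0, 1, 0] ∧
    ∀ t : ℝ, HasDerivAt ψ (-Complex.I • H.mulVec (ψ t)) t := by
  intro H ω ψ
  have hs : ((√(1 + k ^ 2) : ℝ) : ℂ) ≠ 0 :=
    ofReal_ne_zero.mpr (Real.sqrt_pos.mpr (by positivity)).ne'
  have hs_sq : ((√(1 + k ^ 2) : ℝ) : ℂ) ^ 2 = 1 + (k : ℂ) ^ 2 := by
    exact_mod_cast Real.sq_sqrt (by positivity : (0 : ℝ) ≤ 1 + k ^ 2)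
  have hk : 1 + (k : ℂ) ^ 2 ≠ 0 := hs_sq ▸ pow_ne_zero 2 hs
  refine ⟨by ext i; fin_cases i <;> simp [ψ, hk], fun t => ?_⟩
  simp only [H, ψ, Matrix.mulVec_arrowhead₃, Matrix.smul_cons, Matrix.smul_empty, smul_eq_mul]
  apply HasDerivAt.vecCons₃
  · refine (((hasDerivAt_ofReal_sin_mul ω t).const_mul (-I * k)).div_const
      ((√(1 + k ^ 2) : ℝ) : ℂ)).congr_deriv ?_
    simp only [ω, ofReal_mul]
    field_simp
    ring
  · refine ((((hasDerivAt_ofReal_cos_mul ω t).const_mul ((k : ℂ) ^ 2)).const_add 1).div_const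
      (1 + (k : ℂ) ^ 2)).congr_deriv ?_
    simp only [ω, ofReal_mul]
    field_simp
    rw [hs_sq, I_sq]
    ring
  · refine ((((hasDerivAt_ofReal_cos_mul ω t).const_mul (k : ℂ)).const_add (-(k : ℂ))).div_const
      (1 + (k : ℂ) ^ 2)).congr_deriv ?_
    simp only [ω, ofReal_mul]
    field_simp
    rw [hs_sq, I_sq]
    ring
end
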